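/- The number of x-parking functions P_n(x) satisfies P_n(x) = ∑_{(a_1,…,a_n) ∈ PF(n)} x_{a_1}·x_{a_2}⋯x_{a_n}, where PF(n) is the set of ordinary parking functions of length n. -/

import Mathlib

/-!
Cut the positive integers into consecutive blocks `B_k = (x_0+⋯+x_{k-1}, x_0+⋯+x_k]` of sizes
`x_k`. A value `v ∈ B_k` satisfies `v ≤ x_0+⋯+x_i` exactly when `k ≤ i`, so `a` is an
`x`-parking function iff the map `j ↦ (block of a_j)` is an ordinary parking function `f`.
Every value of an `x`-parking function lies in `B_0 ∪ ⋯ ∪ B_{n-1}`, so the `x`-parking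
functions over a given `f` are the choices of one element of `B_{f j}` for each `j`:
`∏ x_{f j}` of them.
-/

open Finset

lemma Finset.sum_Iic_eq_sum_Iio_add {α M : Type*} [PartialOrder α] [LocallyFiniteOrderBot α]
    [DecidableEq α] [AddCommMonoid M] (f : α → M) (k : α) :
    ∑ l ∈ Iic k, f l = ∑ l ∈ Iio k, f l + f k := by
  rw [← Iio_insert, sum_insert notMem_Iio_self, add_comm]

lemma Nat.card_subtype_eq_card_subtype_comp {ι α β : Type*} {e : α → β}
    (he : Function.Injective e) {P : (ι → β) → Prop}
    (hP : ∀ a, P a → ∀ i, a i ∈ Set.range e) :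
    Nat.card {a // P a} = Nat.card {g : ι → α // P (e ∘ g)} := by
  refine (Nat.card_congr (Equiv.ofBijective (fun g => ⟨e ∘ g.1, g.2⟩) ⟨?_, ?_⟩)).symm
  · intro g g' h
    exact Subtype.ext (he.comp_left (congrArg Subtype.val h))
  · rintro ⟨a, ha⟩
    choose g hg using hP a ha
    have hag : e ∘ g = a := funext hg
    exact ⟨⟨g, hag ▸ ha⟩, Subtype.ext hag⟩

lemma Nat.card_subtype_sigma_fst {ι κ : Type*} [Fintype ι] [DecidableEq ι] [Fintype κ]
    (w : κ → ℕ) (P : (ι → κ) → Prop) [DecidablePred P] :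
    Nat.card {g : ι → Σ k, Fin (w k) // P fun i => (g i).1} =
      ∑ f : ι → κ, if P f then ∏ i, w (f i) else 0 := by
  let split : (ι → Σ k, Fin (w k)) ≃ Σ f : ι → κ, ∀ i, Fin (w (f i)) :=
    { toFun g := ⟨fun i => (g i).1, fun i => (g i).2⟩
      invFun p i := ⟨p.1 i, p.2 i⟩ }
  let e : {g : ι → Σ k, Fin (w k) // P fun i => (g i).1} ≃
      Σ f : {f // P f}, ∀ i, Fin (w (f.1 i)) :=
    (split.subtypeEquiv fun _ => Iff.rfl).trans (Equiv.subtypeSigmaEquiv _ P)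
  rw [Nat.card_congr e, Nat.card_eq_fintype_card, Fintype.card_sigma,
    ← sum_filter, ← sum_subtype_eq_sum_filter]
  simp

section BlockValue

variable {n : ℕ} (x : Fin n → ℕ)

/-- The element of index `r` (counted from `0`) of the block `B_k`. -/
def blockValue (p : Σ k : Fin n, Fin (x k)) : ℕ := ∑ l ∈ Iio p.1, x l + p.2 + 1

lemma one_le_blockValue (p : Σ k : Fin n, Fin (x k)) : 1 ≤ blockValue x p :=
  Nat.le_add_left 1 _

lemma blockValue_le_sum_Iic_iff (p : Σ k : Fin n, Fin (x k)) (i : Fin n) :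
    blockValue x p ≤ ∑ l ∈ Iic i, x l ↔ p.1 ≤ i := by
  constructor
  · intro h
    by_contra! hlt
    have : ∑ l ∈ Iic i, x l ≤ ∑ l ∈ Iio p.1, x l :=
      sum_le_sum_of_subset fun l hl => mem_Iio.2 ((mem_Iic.1 hl).trans_lt hlt)
    unfold blockValue at h
    omega
  · intro h
    calc blockValue x p ≤ ∑ l ∈ Iic p.1, x l := by
          rw [sum_Iic_eq_sum_Iio_add, blockValue]; have := p.2.isLt; omega
      _ ≤ ∑ l ∈ Iic i, x l := sum_le_sum_of_subset (Iic_subset_Iic.2 h)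

lemma blockValue_injective : Function.Injective (blockValue x) := by
  rintro ⟨k, r⟩ ⟨k', r'⟩ h
  have hle : ∀ i, k ≤ i ↔ k' ≤ i := fun i => by
    rw [← blockValue_le_sum_Iic_iff x ⟨k, r⟩, ← blockValue_le_sum_Iic_iff x ⟨k', r'⟩, h]
  obtain rfl : k = k' := le_antisymm ((hle k').2 le_rfl) ((hle k).1 le_rfl)
  obtain rfl : r = r' := Fin.ext (by simp only [blockValue] at h; omega)
  rfl

lemma blockValue_le_sum (p : Σ k : Fin n, Fin (x k)) : blockValue x p ≤ ∑ l, x l := by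
  obtain ⟨m, rfl⟩ : ∃ m, n = m + 1 := Nat.exists_eq_add_one_of_ne_zero p.1.pos.ne'
  simpa [← Fin.top_eq_last, Iic_top] using
    (blockValue_le_sum_Iic_iff x p (Fin.last m)).2 (Fin.le_last _)

lemma image_blockValue : univ.image (blockValue x) = Icc 1 (∑ l, x l) := by
  refine eq_of_subset_of_card_le (fun v hv => ?_) ?_
  · obtain ⟨p, -, rfl⟩ := mem_image.1 hv
    exact mem_Icc.2 ⟨one_le_blockValue x p, blockValue_le_sum x p⟩
  · rw [card_image_of_injective _ (blockValue_injective x), card_univ, Fintype.card_sigma]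
    simp

lemma mem_range_blockValue {v : ℕ} :
    v ∈ Set.range (blockValue x) ↔ 1 ≤ v ∧ v ≤ ∑ l, x l := by
  rw [← mem_Icc, ← image_blockValue, mem_image]
  simp

end BlockValue

lemma le_sum_of_le_card_filter {n : ℕ} {x a : Fin n → ℕ}
    (ha : ∀ i : Fin n, (i : ℕ) + 1 ≤ #{j | a j ≤ ∑ l ∈ Iic i, x l}) (j : Fin n) :
    a j ≤ ∑ l, x l := by
  obtain ⟨m, rfl⟩ : ∃ m, n = m + 1 := Nat.exists_eq_add_one_of_ne_zero j.pos.ne'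
  have hfull : #{j | a j ≤ ∑ l ∈ Iic (Fin.last m), x l} = #(univ : Finset (Fin (m + 1))) :=
    le_antisymm (card_le_univ _) (by simpa using ha (Fin.last m))
  have hj := (eq_of_subset_of_card_le (subset_univ _) hfull.ge).symm ▸ mem_univ j
  simpa [← Fin.top_eq_last, Iic_top] using hj

/-- Ordinary parking functions are encoded 0-based: `f i` stands for `a_i - 1`. -/
theorem card_x_parking_eq_sum_over_parking_general (n : ℕ) (x : Fin n → ℕ) :
    Nat.card {a : Fin n → ℕ // (∀ i, 1 ≤ a i) ∧
        ∀ i : Fin n, (i : ℕ) + 1 ≤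
          (Finset.univ.filter (fun j => a j ≤ ∑ l ∈ Finset.Iic i, x l)).card} =
      ∑ f : Fin n → Fin n,
        if (∀ i : Fin n, (i : ℕ) + 1 ≤ (Finset.univ.filter (fun j => f j ≤ i)).card)
        then ∏ i : Fin n, x (f i) else 0 := by
  classical
  rw [Nat.card_subtype_eq_card_subtype_comp (blockValue_injective x)
    fun a ha j => (mem_range_blockValue x).2 ⟨ha.1 j, le_sum_of_le_card_filter ha.2 j⟩]
  simp only [Function.comp_apply, blockValue_le_sum_Iic_iff, one_le_blockValue, implies_true,
    true_and]
  exact Nat.card_subtype_sigma_fst x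
    fun f : Fin n → Fin n => ∀ i : Fin n, (i : ℕ) + 1 ≤ #{j | f j ≤ i}

/-- `P_n(x) = ∑_{(a_1,…,a_n) ∈ PF(n)} x_{a_1}⋯x_{a_n}`: the number of `x`-parking
functions is the sum over ordinary parking functions (encoded 0-based as maps
`f : Fin n → Fin n`, where `f i` represents `a_i - 1`) of the monomials `∏ x_{a_i}`. -/
theorem card_x_parking_eq_sum_over_parking (n : ℕ) (hn : 0 < n) (x : Fin n → ℕ) :
    Nat.card {a : Fin n → ℕ // (∀ i, 1 ≤ a i) ∧
        ∀ i : Fin n, (i : ℕ) + 1 ≤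
          (Finset.univ.filter (fun j => a j ≤ ∑ l ∈ Finset.Iic i, x l)).card} =
      ∑ f : Fin n → Fin n,
        if (∀ i : Fin n, (i : ℕ) + 1 ≤ (Finset.univ.filter (fun j => f j ≤ i)).card)
        then ∏ i : Fin n, x (f i) else 0 :=
  card_x_parking_eq_sum_over_parking_general n x
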